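/- For every path expression pe and every label path lp, L(SOP(pe)_lp) = { lp' | lp'/lp ∈ L(pe) }, where lp' ranges over label paths and lp'/lp denotes concatenation with a / separator (with ε/lp = lp and lp'/ε = lp'). -/
import Mathlib


attribute [local instance] Classical.propDecidable

/-! ## Data model: nodes, labels, edges, document trees -/

abbrev Node := ℕ
abbrev Label := ℕ
abbrev Edge := Node × Label × Node

/-- A candidate document tree: a finite node set, a finite edge set, a root. -/
structure Tree3 where
  N : Finset Node
  E : Finset Edge
  root : Node

/-- The edge-step relation of a set of labelled edges. -/
def estep (E : Set Edge) (a b : Node) : Prop := ∃ l : Label, (a, l, b) ∈ E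

/-- `T` is a document tree: the root is a node, edges connect nodes, every node has at
most one incoming edge, the root has none, and every node is reachable from the root
(edges are directed from parent to child). -/
def IsDT (T : Tree3) : Prop :=
  T.root ∈ T.N ∧
  (∀ e ∈ T.E, e.1 ∈ T.N ∧ e.2.2 ∈ T.N) ∧
  (∀ e ∈ T.E, ∀ e' ∈ T.E, e.2.2 = e'.2.2 → e = e') ∧
  (∀ e ∈ T.E, e.2.2 ≠ T.root) ∧
  (∀ n ∈ T.N, Relation.ReflTransGen (estep (↑T.E)) T.root n)

/-! ## Update operations and queryless schedules -/

inductive Op where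
  | add : Node → Label → Node → Op
  | del : Node → Label → Node → Op
deriving DecidableEq

/-- Apply an update operation to a tree; `none` when the operation is undefined. -/
noncomputable def applyOp (o : Op) (T : Tree3) : Option Tree3 :=
  match o with
  | Op.add m l n =>
      let T' : Tree3 := ⟨insert n T.N, insert (m, l, n) T.E, T.root⟩
      if (m, l, n) ∈ T.E ∨ ¬ IsDT T' then none else some T'
  | Op.del m l n =>
      let T' : Tree3 := ⟨T.N.erase n, T.E.erase (m, l, n), T.root⟩
      if (m, l, n) ∉ T.E ∨ ¬ IsDT T' then none else some T'

/-- An action is an operation tagged with a transaction identifier. -/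
abbrev QLAction := Op × ℕ

/-- A queryless (QL) schedule is a finite sequence of actions. -/
abbrev QLSchedule := List QLAction

/-- Apply a QL schedule to a tree, operation by operation. -/
noncomputable def applyQL : QLSchedule → Tree3 → Option Tree3
  | [], T => some T
  | a :: rest, T => (applyOp a.1 T).bind (applyQL rest)

/-- `S[T]` is defined (and `T` is a document tree). -/
def DefinedOn (S : QLSchedule) (T : Tree3) : Prop := IsDT T ∧ (applyQL S T).isSome

/-- A QL schedule is consistent iff it is defined on at least one document tree. -/
def ConsistentQL (S : QLSchedule) : Prop := ∃ T, DefinedOn S T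

def Op.src : Op → Node
  | Op.add m _ _ => m
  | Op.del m _ _ => m

def Op.tgt : Op → Node
  | Op.add _ _ n => n
  | Op.del _ _ n => n

def Op.edge : Op → Edge
  | Op.add m l n => (m, l, n)
  | Op.del m l n => (m, l, n)

/-- The list of operations of a QL schedule. -/
def ops (S : QLSchedule) : List Op := S.map Prod.fst

/-- The operation containing the first occurrence of the node `x` in `S`, if any. -/
def firstNodeOp (S : QLSchedule) (x : Node) : Option Op :=
  (ops S).find? (fun o => (o.src == x) || (o.tgt == x))

/-- The operation containing the last occurrence of the node `x` in `S`, if any. -/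
def lastNodeOp (S : QLSchedule) (x : Node) : Option Op :=
  (ops S).reverse.find? (fun o => (o.src == x) || (o.tgt == x))

/-- The operation containing the first occurrence of the edge `e` in `S`, if any. -/
def firstEdgeOp (S : QLSchedule) (e : Edge) : Option Op :=
  (ops S).find? (fun o => o.edge == e)

/-- The operation containing the last occurrence of the edge `e` in `S`, if any. -/
def lastEdgeOp (S : QLSchedule) (e : Edge) : Option Op :=
  (ops S).reverse.find? (fun o => o.edge == e)

/-- Some edge with target `x` occurs in `S`. -/
def occursTgt (S : QLSchedule) (x : Node) : Prop := ∃ o ∈ ops S, o.tgt = x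

/-- `N^min_I(S)`. -/
def NminI (S : QLSchedule) : Set Node :=
  {x | ∃ l n, firstNodeOp S x = some (Op.add x l n)} ∪
  {x | ∃ l n, firstNodeOp S x = some (Op.del x l n)} ∪
  {x | ∃ m l, firstNodeOp S x = some (Op.del m l x)}

/-- `N^max_I(S)`. -/
def NmaxI (S : QLSchedule) : Set Node :=
  {x | ¬ ∃ m l, firstNodeOp S x = some (Op.add m l x)}

/-- `E^min_I(S)`. -/
def EminI (S : QLSchedule) : Set Edge :=
  {e | firstEdgeOp S e = some (Op.del e.1 e.2.1 e.2.2)}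

/-- `E^max_I(S)`. -/
def EmaxI (S : QLSchedule) : Set Edge :=
  EminI S ∪ {e | ¬ occursTgt S e.1 ∧ ¬ occursTgt S e.2.2}

/-- `N^min_O(S)`. -/
def NminO (S : QLSchedule) : Set Node :=
  {x | ∃ l n, lastNodeOp S x = some (Op.del x l n)} ∪
  {x | ∃ l n, lastNodeOp S x = some (Op.add x l n)} ∪
  {x | ∃ m l, lastNodeOp S x = some (Op.add m l x)}

/-- `N^max_O(S)`. -/
def NmaxO (S : QLSchedule) : Set Node :=
  {x | ¬ ∃ m l, lastNodeOp S x = some (Op.del m l x)}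

/-- `E^min_O(S)`. -/
def EminO (S : QLSchedule) : Set Edge :=
  {e | lastEdgeOp S e = some (Op.add e.1 e.2.1 e.2.2)}

/-- `E^max_O(S)`. -/
def EmaxO (S : QLSchedule) : Set Edge :=
  EminO S ∪ {e | ¬ occursTgt S e.1 ∧ ¬ occursTgt S e.2.2}

/-- `ADD(S)`: edges whose last occurrence in `S` is an addition. -/
def ADDs (S : QLSchedule) : Set Edge :=
  {e | lastEdgeOp S e = some (Op.add e.1 e.2.1 e.2.2)}

/-- `DEL(S)`: edges whose last occurrence in `S` is a deletion. -/
def DELs (S : QLSchedule) : Set Edge :=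
  {e | lastEdgeOp S e = some (Op.del e.1 e.2.1 e.2.2)}

/-- `T` is a basic input tree of `S`. -/
def BasicInput (S : QLSchedule) (T : Tree3) : Prop :=
  IsDT T ∧ NminI S ⊆ ↑T.N ∧ ↑T.N ⊆ NmaxI S ∧ EminI S ⊆ ↑T.E ∧ ↑T.E ⊆ EmaxI S

/-- `T` is a basic output tree of `S`. -/
def BasicOutput (S : QLSchedule) (T : Tree3) : Prop :=
  IsDT T ∧ NminO S ⊆ ↑T.N ∧ ↑T.N ⊆ NmaxO S ∧ EminO S ⊆ ↑T.E ∧ ↑T.E ⊆ EmaxO S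

/-- The C-condition (nine clauses). -/
def CCond (S : QLSchedule) : Prop :=
  (∀ i j (n l₁ n₁ n₂ l₂ : ℕ), i < j →
      (ops S)[i]? = some (Op.add n l₁ n₁) → (ops S)[j]? = some (Op.add n₂ l₂ n) →
      ∃ k : ℕ, i < k ∧ k < j ∧ (ops S)[k]? = some (Op.del n l₁ n₁)) ∧
  (∀ i j (n₁ l₁ n n₂ l₂ : ℕ), i < j →
      (ops S)[i]? = some (Op.add n₁ l₁ n) → (ops S)[j]? = some (Op.add n₂ l₂ n) →
      ∃ k : ℕ, i < k ∧ k < j ∧ (ops S)[k]? = some (Op.del n₁ l₁ n)) ∧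
  (∀ i j (n l₁ n₁ n₂ l₂ : ℕ), i < j →
      (ops S)[i]? = some (Op.add n l₁ n₁) → (ops S)[j]? = some (Op.del n₂ l₂ n) →
      ∃ k : ℕ, i < k ∧ k < j ∧ (ops S)[k]? = some (Op.del n l₁ n₁)) ∧
  (∀ i j (n₁ l₁ n l₂ n₂ : ℕ), i < j →
      (ops S)[i]? = some (Op.add n₁ l₁ n) → (ops S)[j]? = some (Op.del n l₂ n₂) →
      ∃ k : ℕ, i < k ∧ k < j ∧ (ops S)[k]? = some (Op.add n l₂ n₂)) ∧
  (∀ i j (n₁ l₁ n n₂ l₂ : ℕ), i < j → (n₁, l₁) ≠ (n₂, l₂) →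
      (ops S)[i]? = some (Op.add n₁ l₁ n) → (ops S)[j]? = some (Op.del n₂ l₂ n) →
      ∃ k : ℕ, i < k ∧ k < j ∧ (ops S)[k]? = some (Op.del n₁ l₁ n)) ∧
  (∀ i j (n l₁ n₁ n₂ l₂ : ℕ), i < j →
      (ops S)[i]? = some (Op.del n l₁ n₁) → (ops S)[j]? = some (Op.add n₂ l₂ n) →
      ∃ k : ℕ, ∃ n₃ l₃ : ℕ, i < k ∧ k < j ∧ (ops S)[k]? = some (Op.del n₃ l₃ n)) ∧
  (∀ i j (n₁ l₁ n l₂ n₂ : ℕ), i < j →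
      (ops S)[i]? = some (Op.del n₁ l₁ n) → (ops S)[j]? = some (Op.add n l₂ n₂) →
      ∃ k : ℕ, ∃ n₃ l₃ : ℕ, i < k ∧ k < j ∧ (ops S)[k]? = some (Op.add n₃ l₃ n)) ∧
  (∀ i j (n₁ l₁ n l₂ n₂ : ℕ), i < j →
      (ops S)[i]? = some (Op.del n₁ l₁ n) → (ops S)[j]? = some (Op.del n l₂ n₂) →
      ∃ k : ℕ, ∃ n₃ l₃ : ℕ, i < k ∧ k < j ∧ (ops S)[k]? = some (Op.add n₃ l₃ n)) ∧
  (∀ i j (n₁ l₁ n n₂ l₂ : ℕ), i < j →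
      (ops S)[i]? = some (Op.del n₁ l₁ n) → (ops S)[j]? = some (Op.del n₂ l₂ n) →
      ∃ k : ℕ, i < k ∧ k < j ∧ (ops S)[k]? = some (Op.add n₂ l₂ n))

/-! ## Transactions, equivalence and serializability of QL schedules -/

/-- Two QL schedules are interleavings of the same set of transactions: for every
transaction identifier, the subsequences of actions with that identifier coincide. -/
def SameTrans (S S' : QLSchedule) : Prop :=
  ∀ t : ℕ, S.filter (fun a => a.2 == t) = S'.filter (fun a => a.2 == t)

/-- A schedule is serial iff the actions of each transaction occur consecutively. -/
def Serial (S : QLSchedule) : Prop :=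
  ∀ i j k : ℕ, i ≤ j → j ≤ k →
    ∀ a b c : QLAction, S[i]? = some a → S[j]? = some b → S[k]? = some c →
      a.2 = c.2 → b.2 = a.2

/-- Two QL schedules are equivalent: they are defined on the same non-empty set of
document trees and produce the same output tree on each of them. -/
def EquivQL (S S' : QLSchedule) : Prop :=
  (∃ T, DefinedOn S T) ∧ ∀ T, IsDT T → applyQL S T = applyQL S' T

/-- A QL schedule is serializable iff it is equivalent to a serial schedule over the
same set of transactions. -/
def SerializableQL (S : QLSchedule) : Prop :=
  ∃ S', Serial S' ∧ SameTrans S S' ∧ EquivQL S S'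

/-! ## Paths and forests -/

/-- `SPath G m lp n`: there is a directed path from `m` to `n` in the edge set `G`
whose label path is `lp`. -/
inductive SPath (G : Set Edge) : Node → List Label → Node → Prop where
  | nil (n : Node) : SPath G n [] n
  | cons {m n n' : Node} {l : Label} {lp : List Label} :
      (m, l, n) ∈ G → SPath G n lp n' → SPath G m (l :: lp) n'

/-- A set of edges is a forest: no two distinct edges share a target, and
there is no (non-trivial) directed cycle. -/
def IsForest (G : Set Edge) : Prop :=
  (∀ e ∈ G, ∀ e' ∈ G, e.2.2 = e'.2.2 → e = e') ∧
  ¬ ∃ (n : Node) (lp : List Label), lp ≠ [] ∧ SPath G n lp n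

/-! ## Path expressions -/

inductive Step where
  | star : Step
  | lab : Label → Step
deriving DecidableEq

/-- Path expressions: `ε`, `pe/f` and `pe//f` (a single step `f` is `ε/f`). -/
inductive PathExpr where
  | eps : PathExpr
  | child : PathExpr → Step → PathExpr
  | desc : PathExpr → Step → PathExpr
deriving DecidableEq

def Step.mtch : Step → Label → Prop
  | Step.star, _ => True
  | Step.lab l, l' => l = l'

def Step.mtchB : Step → Label → Bool
  | Step.star, _ => true
  | Step.lab l, l' => l == l'

/-- The set `L(pe)` of label paths represented by a path expression
(a label path is a list of labels). -/
def PathExpr.lang : PathExpr → Set (List Label)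
  | PathExpr.eps => {[]}
  | PathExpr.child pe f => {w | ∃ u l, u ∈ pe.lang ∧ f.mtch l ∧ w = u ++ [l]}
  | PathExpr.desc pe f => {w | ∃ u v l, u ∈ pe.lang ∧ f.mtch l ∧ w = u ++ v ++ [l]}

/-- `SOP` on a *reversed* label path. -/
def SOPr : PathExpr → List Label → Set PathExpr
  | pe, [] => {pe}
  | PathExpr.eps, _ :: _ => ∅
  | PathExpr.child pe f, l :: lp => if f.mtchB l then SOPr pe lp else ∅
  | PathExpr.desc pe f, l :: lp =>
      if f.mtchB l then SOPr pe lp ∪ SOPr (PathExpr.desc pe Step.star) lp else ∅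
termination_by pe lp => lp.length

/-- `SOP(pe)_lp`: the set of non-empty `lp`-prefixes of `pe`. -/
def SOP (pe : PathExpr) (lp : List Label) : Set PathExpr := SOPr pe lp.reverse

/-- `L(SOP(pe)_lp)`. -/
def LSOP (pe : PathExpr) (lp : List Label) : Set (List Label) :=
  ⋃ pe' ∈ SOP pe lp, pe'.lang

/-- `pe/lp`: append a label path to a path expression with `/` separators. -/
def PathExpr.appendLP : PathExpr → List Label → PathExpr
  | pe, [] => pe
  | pe, l :: lp => PathExpr.appendLP (PathExpr.child pe (Step.lab l)) lp

/-- The prefixes of a path expression (including `ε`). -/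
def PathExpr.prefixes : PathExpr → Set PathExpr
  | PathExpr.eps => {PathExpr.eps}
  | PathExpr.child pe f => insert (PathExpr.child pe f) pe.prefixes
  | PathExpr.desc pe f => insert (PathExpr.desc pe f) pe.prefixes

/-! ## Schedules with queries -/

inductive GOp where
  | query : Node → PathExpr → GOp
  | add : Node → Label → Node → GOp
  | del : Node → Label → Node → GOp

abbrev GAction := GOp × ℕ

/-- A (general) schedule is a finite sequence of query/add/del actions. -/
abbrev Schedule := List GAction

def GOp.toOp? : GOp → Option Op
  | GOp.query _ _ => none
  | GOp.add m l n => some (Op.add m l n)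
  | GOp.del m l n => some (Op.del m l n)

/-- The QL schedule of a schedule: remove all query actions. -/
def qlOf (S : Schedule) : QLSchedule :=
  S.filterMap (fun a => (a.1.toOp?).map (fun o => (o, a.2)))

/-- The answer of `query(n,pe)` on a tree `T`. -/
def queryAnswer (n : Node) (pe : PathExpr) (T : Tree3) : Set Node :=
  {n' | n' ∈ T.N ∧ ∃ lp, SPath (↑T.E) n lp n' ∧ lp ∈ pe.lang}

/-- A schedule is consistent iff its QL schedule is. -/
def ConsistentSched (S : Schedule) : Prop := ConsistentQL (qlOf S)

/-- Run a schedule on a tree: the final tree together with, for each query (in order),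
its transaction identifier and its answer; `none` if some update is undefined. -/
noncomputable def runQ : Schedule → Tree3 → Option (Tree3 × List (ℕ × Set Node))
  | [], T => some (T, [])
  | (GOp.query n pe, t) :: rest, T =>
      (runQ rest T).map (fun p => (p.1, (t, queryAnswer n pe T) :: p.2))
  | (GOp.add m l n, _) :: rest, T =>
      (applyOp (Op.add m l n) T).bind (runQ rest)
  | (GOp.del m l n, _) :: rest, T =>
      (applyOp (Op.del m l n) T).bind (runQ rest)

/-- Two schedules are equivalent: defined on the same non-empty set of document trees,
and on each such tree they produce the same output tree and, per transaction, the same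
sequence of query answers. -/
def EquivSched (S₁ S₂ : Schedule) : Prop :=
  (∃ T, IsDT T ∧ (runQ S₁ T).isSome) ∧
  ∀ T, IsDT T →
    ((runQ S₁ T).isSome ↔ (runQ S₂ T).isSome) ∧
    ∀ p₁ p₂, runQ S₁ T = some p₁ → runQ S₂ T = some p₂ →
      p₁.1 = p₂.1 ∧
      ∀ t : ℕ, (p₁.2.filter (fun x => x.1 == t)).map Prod.snd
             = (p₂.2.filter (fun x => x.1 == t)).map Prod.snd

/-- Two schedules are interleavings of the same set of transactions. -/
def SameTransG (S S' : Schedule) : Prop :=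
  ∀ t : ℕ, S.filter (fun a => a.2 == t) = S'.filter (fun a => a.2 == t)

/-- A schedule is serial iff the actions of each transaction occur consecutively. -/
def SerialG (S : Schedule) : Prop :=
  ∀ i j k : ℕ, i ≤ j → j ≤ k →
    ∀ a b c : GAction, S[i]? = some a → S[j]? = some b → S[k]? = some c →
      a.2 = c.2 → b.2 = a.2

/-- A schedule is serializable iff it is equivalent to a serial schedule over the same
set of transactions. -/
def SerializableSched (S : Schedule) : Prop :=
  ∃ S', SerialG S' ∧ SameTransG S S' ∧ EquivSched S S'

/-- `E^min(S^Q)` where `Q` is the action at position `i` of `S`. -/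
def EminSQ (S : Schedule) (i : ℕ) : Set Edge :=
  (EminI (qlOf S) \ DELs (qlOf (S.take i))) ∪ ADDs (qlOf (S.take i))

/-- `E^max(S^Q)` where `Q` is the action at position `i` of `S`. -/
def EmaxSQ (S : Schedule) (i : ℕ) : Set Edge :=
  (EmaxI (qlOf S) \ DELs (qlOf (S.take i))) ∪ ADDs (qlOf (S.take i))

/-- `x` is a non-building-node of `S`: some `add(m,l,x)` or `del(m,l,x)` occurs in `S`. -/
def NonBuilding (S : Schedule) (x : Node) : Prop :=
  ∃ a ∈ S, ∃ m l, a.1 = GOp.add m l x ∨ a.1 = GOp.del m l x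

/-- `x` is a node of the graph (edge set) `G`. -/
def NodeOfGraph (G : Set Edge) (x : Node) : Prop := ∃ e ∈ G, e.1 = x ∨ e.2.2 = x

/-- `x` has a parent in the edge set `G`. -/
def HasParent (G : Set Edge) (x : Node) : Prop := ∃ e ∈ G, e.2.2 = x

/-- `PQRN(S,Q)` for the query `Q = query(n,pe)` at position `i` of `S`:
the nodes `m` of the graph `E^min(S^Q)` that are non-building-nodes, whose root
ancestor `r` in the forest `E^min(S^Q)` (the node with no parent from which `m` is
reachable, via the label path `ALabel(S^Q,m)`) is a building-node different from `n`,
and such that `L(SOP(pe)_{ALabel(S^Q,m)}) ≠ ∅`. -/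
def PQRN (S : Schedule) (i : ℕ) (n : Node) (pe : PathExpr) : Set Node :=
  {m | NodeOfGraph (EminSQ S i) m ∧ NonBuilding S m ∧
       ∃ r lp, SPath (EminSQ S i) r lp m ∧ ¬ HasParent (EminSQ S i) r ∧
         ¬ NonBuilding S r ∧ r ≠ n ∧ LSOP pe lp ≠ ∅}

/-- The answer of the query at position `i` of `S` when `S` is applied to `T`
(the query is evaluated on the tree obtained by applying the actions before it). -/
noncomputable def answerAt (S : Schedule) (i : ℕ) (T : Tree3) : Option (Set Node) :=
  match S[i]? with
  | some (GOp.query n pe, _) => (applyQL (qlOf (S.take i)) T).map (queryAnswer n pe)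
  | _ => none

lemma step_mtchB_iff (f : Step) (l : Label) : f.mtchB l = true ↔ f.mtch l := by
  cases f <;> simp [Step.mtchB, Step.mtch]

lemma sopr_mem (rlp : List Label) : ∀ (pe : PathExpr) (w : List Label),
    (∃ pe' ∈ SOPr pe rlp, w ∈ pe'.lang) ↔ w ++ rlp.reverse ∈ pe.lang := by
  induction rlp with
  | nil => intro pe w; simp [SOPr]
  | cons l rest ih =>
    intro pe w
    have hcat : (l :: rest).reverse = rest.reverse ++ [l] := by simp
    cases pe with
    | eps =>
      simp only [SOPr, hcat, PathExpr.lang]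
      constructor
      · rintro ⟨pe', h, _⟩; exact absurd h (by simp)
      · intro h
        have : (w ++ (rest.reverse ++ [l])).length = 0 := by
          simp only [Set.mem_singleton_iff] at h; simp [h]
        simp at this
    | child pe f =>
      rw [hcat, show w ++ (rest.reverse ++ [l]) = (w ++ rest.reverse) ++ [l] by simp]
      simp only [SOPr, PathExpr.lang, Set.mem_setOf_eq]
      by_cases hm : f.mtchB l
      · rw [if_pos hm]
        rw [ih pe (w)]
        constructor
        · intro h
          exact ⟨w ++ rest.reverse, l, h, (step_mtchB_iff f l).1 hm, rfl⟩
        · rintro ⟨u, l', hu, hml, heq⟩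
          have := List.append_inj' heq.symm (by simp)
          obtain ⟨h1, h2⟩ := this
          simp at h2
          rw [← h1]; exact hu
      · rw [if_neg hm]
        constructor
        · rintro ⟨pe', h, _⟩; exact absurd h (by simp)
        · rintro ⟨u, l', hu, hml, heq⟩
          have := List.append_inj' heq.symm (by simp)
          obtain ⟨h1, h2⟩ := this
          simp at h2
          rw [h2] at hml
          exact ((hm ((step_mtchB_iff f l).2 hml))).elim
    | desc pe f =>
      rw [hcat, show w ++ (rest.reverse ++ [l]) = (w ++ rest.reverse) ++ [l] by simp]
      simp only [SOPr, PathExpr.lang, Set.mem_setOf_eq]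
      by_cases hm : f.mtchB l
      · rw [if_pos hm]
        constructor
        · rintro ⟨pe', hpe', hw⟩
          rcases hpe' with h | h
          · have : w ++ rest.reverse ∈ pe.lang := (ih pe w).1 ⟨pe', h, hw⟩
            exact ⟨w ++ rest.reverse, [], l, this, (step_mtchB_iff f l).1 hm, by simp⟩
          · have : w ++ rest.reverse ∈ (PathExpr.desc pe Step.star).lang :=
              (ih _ w).1 ⟨pe', h, hw⟩
            obtain ⟨u, v, l', hu, _, heq⟩ := this
            refine ⟨u, v ++ [l'], l, hu, (step_mtchB_iff f l).1 hm, ?_⟩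
            rw [heq]; simp
        · rintro ⟨u, v, l', hu, hml, heq⟩
          have := List.append_inj' heq (by simp)
          obtain ⟨h1, _⟩ := this
          rcases List.eq_nil_or_concat v with rfl | ⟨v', a, rfl⟩
          · simp at h1
            have : ∃ pe' ∈ SOPr pe rest, w ∈ pe'.lang := by
              rw [ih pe w, h1]; exact hu
            obtain ⟨pe', hp, hw⟩ := this
            exact ⟨pe', Or.inl hp, hw⟩
          · have : w ++ rest.reverse ∈ (PathExpr.desc pe Step.star).lang := by
              rw [h1]; exact ⟨u, v', a, hu, trivial, by simp⟩
            obtain ⟨pe', hp, hw⟩ := (ih (PathExpr.desc pe Step.star) w).2 this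
            exact ⟨pe', Or.inr hp, hw⟩
      · rw [if_neg hm]
        constructor
        · rintro ⟨pe', h, _⟩; exact absurd h (by simp)
        · rintro ⟨u, v, l', hu, hml, heq⟩
          have := List.append_inj' heq (by simp)
          obtain ⟨_, h2⟩ := this
          simp at h2
          rw [← h2] at hml
          exact ((hm ((step_mtchB_iff f l).2 hml))).elim

/-- `L(SOP(pe)_lp) = { lp' | lp'/lp ∈ L(pe) }`. -/
theorem lsop_eq_quotient (pe : PathExpr) (lp : List Label) :
    LSOP pe lp = {lp' : List Label | lp' ++ lp ∈ pe.lang} := by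
  ext w
  have := sopr_mem lp.reverse pe w
  simp only [List.reverse_reverse] at this
  simpa [LSOP, SOP] using this
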